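/- Let x(·) be a solution of the nonlinear multiagent system, let t ≥ 0 and τ > 0, and let (i,j) be a pair of indices such that |x_i(s) − x_j(s)| = D(x(s)) for all s ∈ [t, t+τ] and such that the diameter s ↦ D(x(s)) is constant and positive on [t, t+τ]. Then both agents i and j are stationary on this window: x_i(s) = x_i(t) and x_j(s) = x_j(t) for all s ∈ [t, t+τ]. -/

import Mathlib

open MeasureTheory Finset

noncomputable section

/-- Diameter of a configuration of `N` agents in `ℝ^d`. -/
def mDiam {N d : ℕ} (x : Fin N → EuclideanSpace ℝ (Fin d)) : ℝ :=
  ⨆ i : Fin N, ⨆ j : Fin N, ‖x i - x j‖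

/-- Variance of a configuration of `N` agents in `ℝ^d`. -/
def mVar {N d : ℕ} (x : Fin N → EuclideanSpace ℝ (Fin d)) : ℝ :=
  (N : ℝ)⁻¹ * ∑ i : Fin N, ‖x i - (N : ℝ)⁻¹ • ∑ k : Fin N, x k‖ ^ 2

/-- Admissible interaction signals: measurable, valued in `[0,1]` on `[0,∞)`. -/
def ValidSignal (N : ℕ) (a : Fin N → Fin N → ℝ → ℝ) : Prop :=
  ∀ i j, Measurable (a i j) ∧ ∀ t : ℝ, 0 ≤ t → a i j t ∈ Set.Icc (0 : ℝ) 1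

/-- Admissible kernels: locally Lipschitz and positive on `[0,∞)`. -/
def ValidKernel (φ : ℝ → ℝ) : Prop :=
  LocallyLipschitz φ ∧ ∀ r : ℝ, 0 ≤ r → 0 < φ r

/-- Solutions of the nonlinear multiagent system
`ẋ_i(t) = (1/N) ∑_j a_{ij}(t) φ(|x_i(t) − x_j(t)|)(x_j(t) − x_i(t))` for a.e. `t ≥ 0`,
as locally Lipschitz curves on `[0,∞)`. -/
def IsMASol {N d : ℕ} (a : Fin N → Fin N → ℝ → ℝ) (φ : ℝ → ℝ)
    (x : Fin N → ℝ → EuclideanSpace ℝ (Fin d)) : Prop :=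
  (∀ i, ∀ r : ℝ, 0 < r → ∃ K : NNReal, LipschitzOnWith K (x i) (Set.Icc 0 r)) ∧
  (∀ᵐ t ∂(volume : Measure ℝ), 0 ≤ t → ∀ i, HasDerivAt (x i)
    ((N : ℝ)⁻¹ • ∑ j : Fin N, (a i j t * φ ‖x i t - x j t‖) • (x j t - x i t)) t)

/-- The scrambling coefficient of an `N × N` matrix. -/
def scrambling {N : ℕ} (A : Fin N → Fin N → ℝ) : ℝ :=
  ⨅ i : Fin N, ⨅ j : Fin N, (N : ℝ)⁻¹ * ∑ k : Fin N, min (A i k) (A j k)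

/-- Scrambling-persistent signals: the scrambling coefficient of the averaged matrix
over every window `[t, t+τ]` is at least `μ`. -/
def ScramblingPersistent (N : ℕ) (τ μ : ℝ) (a : Fin N → Fin N → ℝ → ℝ) : Prop :=
  ValidSignal N a ∧
  ∀ t : ℝ, 0 ≤ t → μ ≤ scrambling (fun i j => τ⁻¹ * ∫ s in t..t + τ, a i j s)

/-- A matrix is balanced if its in- and out-degrees coincide. -/
def IsBalanced {N : ℕ} (A : Fin N → Fin N → ℝ) : Prop :=
  ∀ i, ∑ j : Fin N, A i j = ∑ j : Fin N, A j i

/-- The algebraic connectivity of a (balanced) matrix: the largest `λ` such that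
`(1/(2N²)) ∑_{ij} a_{ij} |x_i − x_j|² ≥ λ V(x)` for all configurations `x`. -/
def lambda2 (d : ℕ) {N : ℕ} (A : Fin N → Fin N → ℝ) : ℝ :=
  sSup {lam : ℝ | ∀ x : Fin N → EuclideanSpace ℝ (Fin d),
    lam * mVar x ≤ (2 * (N : ℝ) ^ 2)⁻¹ * ∑ i : Fin N, ∑ j : Fin N, A i j * ‖x i - x j‖ ^ 2}

/-- Connectivity-persistent balanced signals. -/
def ConnectivityPersistent (N d : ℕ) (τ μ : ℝ) (a : Fin N → Fin N → ℝ → ℝ) : Prop :=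
  ValidSignal N a ∧
  (∀ᵐ t ∂(volume : Measure ℝ), 0 ≤ t → IsBalanced (fun i j => a i j t)) ∧
  ∀ t : ℝ, 0 ≤ t → μ ≤ lambda2 d (fun i j => τ⁻¹ * ∫ s in t..t + τ, a i j s)

/-- Solutions of the linear multiagent system
`ẋ_i(t) = (1/N) ∑_j a_{ij}(t) (x_j(t) − x_i(t))` for a.e. `t ≥ 0`. -/
def IsLinSol {N d : ℕ} (a : Fin N → Fin N → ℝ → ℝ)
    (x : Fin N → ℝ → EuclideanSpace ℝ (Fin d)) : Prop :=
  (∀ i, ∀ r : ℝ, 0 < r → ∃ K : NNReal, LipschitzOnWith K (x i) (Set.Icc 0 r)) ∧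
  (∀ᵐ t ∂(volume : Measure ℝ), 0 ≤ t → ∀ i, HasDerivAt (x i)
    ((N : ℝ)⁻¹ • ∑ j : Fin N, a i j t • (x j t - x i t)) t)

/-!
Write `u = x_i - x_j`. Since `(i, j)` realises the diameter, every agent lies in the ball of
radius `‖u‖` around `x_j`, so each attraction `x_k - x_i` has `⟪x_k - x_i, u⟫ ≤ -‖x_k - x_i‖² / 2`;
hence the velocity of `i` satisfies `⟪ẋ_i, u⟫ ≤ 0` and, symmetrically, `⟪ẋ_j, u⟫ ≥ 0`. As `‖u‖` is
constant, `⟪ẋ_i - ẋ_j, u⟫ = 0`, so both inner products vanish, which forces every weighted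
attraction on `i` and on `j` to vanish. The two agents thus have zero velocity almost everywhere
on the window, and being Lipschitz they are constant there.
-/

open scoped RealInnerProductSpace

lemma norm_sub_le_mDiam {N d : ℕ} (y : Fin N → EuclideanSpace ℝ (Fin d)) (k l : Fin N) :
    ‖y k - y l‖ ≤ mDiam y :=
  (le_ciSup (Set.finite_range fun l' => ‖y k - y l'‖).bddAbove l).trans
    (le_ciSup (f := fun k' => ⨆ l', ‖y k' - y l'‖) (Set.finite_range _).bddAbove k)

section ConsensusField

variable {E : Type*} [NormedAddCommGroup E] [InnerProductSpace ℝ E]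

lemma two_inner_sub_le_neg_norm_sq {p q z : E} (h : ‖p - q‖ ≤ ‖z - q‖) :
    2 * ⟪p - z, z - q⟫ ≤ -‖p - z‖ ^ 2 := by
  have hsq := norm_add_sq_real (p - z) (z - q)
  rw [sub_add_sub_cancel] at hsq
  nlinarith [pow_le_pow_left₀ (norm_nonneg _) h 2]

lemma inner_eq_zero_of_hasDerivAt_of_norm_eventuallyEq {f : ℝ → E} {f' : E} {s : ℝ}
    (hf : HasDerivAt f f' s) (hconst : ∀ᶠ σ in nhds s, ‖f σ‖ = ‖f s‖) :
    ⟪f', f s⟫ = 0 := by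
  have hzero : HasDerivAt (‖f ·‖ ^ 2) 0 s :=
    (hasDerivAt_const s (‖f s‖ ^ 2)).congr_of_eventuallyEq
      (hconst.mono fun σ hσ => by simp only [hσ])
  have := hf.norm_sq.unique hzero
  rw [real_inner_comm]
  linarith

variable {ι : Type*} [Fintype ι]

lemma two_inner_sum_smul_sub_le {c : ι → ℝ} {y : ι → E} {q z : E} (hc : ∀ k, 0 ≤ c k)
    (hy : ∀ k, ‖y k - q‖ ≤ ‖z - q‖) :
    2 * ⟪∑ k, c k • (y k - z), z - q⟫ ≤ -∑ k, c k * ‖y k - z‖ ^ 2 := by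
  rw [sum_inner, Finset.mul_sum, ← Finset.sum_neg_distrib]
  gcongr with k
  rw [real_inner_smul_left]
  nlinarith [two_inner_sub_le_neg_norm_sq (hy k), hc k]

lemma inner_sum_smul_sub_nonpos {c : ι → ℝ} {y : ι → E} {q z : E} (hc : ∀ k, 0 ≤ c k)
    (hy : ∀ k, ‖y k - q‖ ≤ ‖z - q‖) :
    ⟪∑ k, c k • (y k - z), z - q⟫ ≤ 0 := by
  have := two_inner_sum_smul_sub_le hc hy
  have : 0 ≤ ∑ k, c k * ‖y k - z‖ ^ 2 := Finset.sum_nonneg fun k _ => by have := hc k; positivity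
  linarith

lemma sum_smul_sub_eq_zero_of_inner_nonneg {c : ι → ℝ} {y : ι → E} {q z : E}
    (hc : ∀ k, 0 ≤ c k) (hy : ∀ k, ‖y k - q‖ ≤ ‖z - q‖)
    (h : 0 ≤ ⟪∑ k, c k • (y k - z), z - q⟫) :
    ∑ k, c k • (y k - z) = 0 := by
  have hterm : ∀ k, 0 ≤ c k * ‖y k - z‖ ^ 2 := fun k => by have := hc k; positivity
  have hsum : ∑ k, c k * ‖y k - z‖ ^ 2 = 0 :=
    le_antisymm (by linarith [two_inner_sum_smul_sub_le hc hy])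
      (Finset.sum_nonneg fun k _ => hterm k)
  refine Finset.sum_eq_zero fun k hk => ?_
  rcases mul_eq_zero.1 ((Finset.sum_eq_zero_iff_of_nonneg fun k _ => hterm k).1 hsum k hk)
    with hck | hyk
  · rw [hck, zero_smul]
  · rw [sub_eq_zero.1 (norm_eq_zero.1 (pow_eq_zero_iff two_ne_zero |>.1 hyk)), sub_self,
      smul_zero]

def consensusField (c : ι → ι → ℝ) (y : ι → E) (k : ι) : E :=
  ∑ l, c k l • (y l - y k)

lemma consensusField_eq_zero_of_diametral {c : ι → ι → ℝ} (hc : ∀ k l, 0 ≤ c k l) {y : ι → E}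
    {p q : ι} (hdiam : ∀ k l, ‖y k - y l‖ ≤ ‖y p - y q‖)
    (hstat : ⟪consensusField c y p - consensusField c y q, y p - y q⟫ = 0) :
    consensusField c y p = 0 ∧ consensusField c y q = 0 := by
  have hp : ⟪consensusField c y p, y p - y q⟫ ≤ 0 :=
    inner_sum_smul_sub_nonpos (hc p) fun k => hdiam k q
  have hq : ⟪consensusField c y q, y q - y p⟫ ≤ 0 :=
    inner_sum_smul_sub_nonpos (hc q) fun k => (hdiam k p).trans_eq (norm_sub_rev _ _)
  rw [← neg_sub, inner_neg_right] at hq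
  rw [inner_sub_left] at hstat
  refine ⟨sum_smul_sub_eq_zero_of_inner_nonneg (hc p) (fun k => hdiam k q) ?_,
    sum_smul_sub_eq_zero_of_inner_nonneg (hc q)
      (fun k => (hdiam k p).trans_eq (norm_sub_rev _ _)) ?_⟩
  · change 0 ≤ ⟪consensusField c y p, y p - y q⟫
    linarith
  · change 0 ≤ ⟪consensusField c y q, y q - y p⟫
    rw [← neg_sub, inner_neg_right]
    linarith

end ConsensusField

lemma smul_sum_eq_consensusField {N d : ℕ} (a : Fin N → Fin N → ℝ → ℝ) (φ : ℝ → ℝ)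
    (y : Fin N → EuclideanSpace ℝ (Fin d)) (s : ℝ) (k : Fin N) :
    (N : ℝ)⁻¹ • ∑ l : Fin N, (a k l s * φ ‖y k - y l‖) • (y l - y k) =
      consensusField (fun k l => (N : ℝ)⁻¹ * (a k l s * φ ‖y k - y l‖)) y k := by
  simp only [consensusField, Finset.smul_sum, smul_smul]

lemma LipschitzOnWith.eqOn_of_ae_hasDerivAt_zero {F : Type*} [NormedAddCommGroup F]
    [NormedSpace ℝ F] {f : ℝ → F} {K : NNReal} {a b : ℝ} (hf : LipschitzOnWith K f (Set.Icc a b))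
    (hderiv : ∀ᵐ s, s ∈ Set.Ioo a b → HasDerivAt f 0 s) :
    ∀ s ∈ Set.Icc a b, f s = f a := by
  intro s hs
  have hab : a ≤ b := hs.1.trans hs.2
  rw [← Set.uIcc_of_le hab] at hf hs
  have hderiv' : ∀ᵐ s, s ∈ Set.uIcc a b → HasDerivAt f 0 s := by
    filter_upwards [hderiv, volume.ae_ne a, volume.ae_ne b] with σ hσ hσa hσb hσI
    rw [Set.uIcc_of_le hab] at hσI
    exact hσ ⟨lt_of_le_of_ne hσI.1 (Ne.symm hσa), lt_of_le_of_ne hσI.2 hσb⟩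
  obtain ⟨C, hC⟩ := hf.absolutelyContinuousOnInterval.const_of_ae_hasDerivAt_zero hderiv'
  rw [hC s hs, hC a Set.left_mem_uIcc]

theorem fixed_maximising_pair_stationary_general {N d : ℕ}
    (a : Fin N → Fin N → ℝ → ℝ) (φ : ℝ → ℝ)
    (ha : ValidSignal N a) (hφ : ValidKernel φ)
    (x : Fin N → ℝ → EuclideanSpace ℝ (Fin d)) (hx : IsMASol a φ x)
    (t τ : ℝ) (ht : 0 ≤ t) (hτ : 0 < τ) (i j : Fin N)
    (hmax : ∀ s ∈ Set.Icc t (t + τ), ‖x i s - x j s‖ = mDiam (fun k => x k s))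
    (hconst : ∀ s ∈ Set.Icc t (t + τ), mDiam (fun k => x k s) = mDiam (fun k => x k t)) :
    ∀ s ∈ Set.Icc t (t + τ), x i s = x i t ∧ x j s = x j t := by
  obtain ⟨hlip, hderiv⟩ := hx
  have hrest : ∀ᵐ s, s ∈ Set.Ioo t (t + τ) → HasDerivAt (x i) 0 s ∧ HasDerivAt (x j) 0 s := by
    filter_upwards [hderiv] with s hs hsI
    have hsIcc : s ∈ Set.Icc t (t + τ) := Set.Ioo_subset_Icc_self hsI
    have hv : ∀ k, HasDerivAt (x k) (consensusField
        (fun k l => (N : ℝ)⁻¹ * (a k l s * φ ‖x k s - x l s‖)) (fun k => x k s) k) s := by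
      intro k
      rw [← smul_sum_eq_consensusField]
      exact hs (ht.trans hsIcc.1) k
    have hc : ∀ k l, 0 ≤ (N : ℝ)⁻¹ * (a k l s * φ ‖x k s - x l s‖) := fun k l =>
      mul_nonneg (by positivity)
        (mul_nonneg ((ha k l).2 s (ht.trans hsIcc.1)).1 (hφ.2 _ (norm_nonneg _)).le)
    have hnorm : ∀ᶠ σ in nhds s, ‖x i σ - x j σ‖ = ‖x i s - x j s‖ := by
      filter_upwards [Ioo_mem_nhds hsI.1 hsI.2] with σ hσ
      rw [hmax σ (Set.Ioo_subset_Icc_self hσ), hconst σ (Set.Ioo_subset_Icc_self hσ),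
        hmax s hsIcc, hconst s hsIcc]
    obtain ⟨hi, hj⟩ := consensusField_eq_zero_of_diametral hc (p := i) (q := j)
      (fun k l => (norm_sub_le_mDiam (fun k => x k s) k l).trans_eq (hmax s hsIcc).symm)
      (inner_eq_zero_of_hasDerivAt_of_norm_eventuallyEq ((hv i).sub (hv j)) hnorm)
    exact ⟨hi ▸ hv i, hj ▸ hv j⟩
  have hlipIcc : ∀ k, ∃ K, LipschitzOnWith K (x k) (Set.Icc t (t + τ)) := fun k =>
    (hlip k (t + τ) (by linarith)).imp fun K hK => hK.mono (Set.Icc_subset_Icc_left ht)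
  obtain ⟨Ki, hKi⟩ := hlipIcc i
  obtain ⟨Kj, hKj⟩ := hlipIcc j
  exact fun s hs => ⟨hKi.eqOn_of_ae_hasDerivAt_zero (hrest.mono fun _ h hs => (h hs).1) s hs,
    hKj.eqOn_of_ae_hasDerivAt_zero (hrest.mono fun _ h hs => (h hs).2) s hs⟩

/-- if a fixed pair `(i,j)` realises the diameter throughout `[t, t+τ]` and
the diameter is constant and positive there, then the agents `i` and `j` are stationary
on this window. -/
theorem fixed_maximising_pair_stationary {N d : ℕ} (hN : 1 ≤ N)
    (a : Fin N → Fin N → ℝ → ℝ) (φ : ℝ → ℝ)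
    (ha : ValidSignal N a) (hφ : ValidKernel φ)
    (x : Fin N → ℝ → EuclideanSpace ℝ (Fin d)) (hx : IsMASol a φ x)
    (t τ : ℝ) (ht : 0 ≤ t) (hτ : 0 < τ) (i j : Fin N)
    (hmax : ∀ s ∈ Set.Icc t (t + τ), ‖x i s - x j s‖ = mDiam (fun k => x k s))
    (hconst : ∀ s ∈ Set.Icc t (t + τ), mDiam (fun k => x k s) = mDiam (fun k => x k t))
    (hpos : 0 < mDiam (fun k => x k t)) :
    ∀ s ∈ Set.Icc t (t + τ), x i s = x i t ∧ x j s = x j t :=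
  fixed_maximising_pair_stationary_general a φ ha hφ x hx t τ ht hτ i j hmax hconst
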